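/- arXiv:2311.07489 — 6 statements merged into one kernel-verified Lean document; each statement's English description precedes it below -/
import Mathlib

section
/- Let k : X → A, s : B → A be a cospan that is extremally epic (any factorization of both k and s through a monomorphism m : M → A forces m to be an isomorphism), in a finitely complete category in which every cospan consisting of a mono and a strong epi admits diagonal fillers (e.g. a regular category), and let h : Y → Z be a monomorphism. If h ∘ f and h ∘ g commute relatively to (k,s), then f and g commute relatively to (k,s). -/
open CategoryTheory CategoryTheory.Limits

/-- In a finitely complete category in which every cospan consisting of a mono
and a strong epi admits diagonal fillers, given an extremally epic cospan `(k, s)` and a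
monomorphism `h : Y ⟶ Z`, if `h ∘ f` and `h ∘ g` commute relatively to `(k, s)`, then
`f` and `g` commute relatively to `(k, s)`. -/
theorem cancel_mono_relative_commute {C : Type*} [Category C] [HasFiniteLimits C]
    {X A B Y Z : C} (k : X ⟶ A) (s : B ⟶ A)
    (hext : ∀ {M : C} (m : M ⟶ A), Mono m →
      (∃ k' : X ⟶ M, k' ≫ m = k) → (∃ s' : B ⟶ M, s' ≫ m = s) → IsIso m)
    (hfill : ∀ {P Q R S : C} (e : P ⟶ Q) (m : R ⟶ S), StrongEpi e → Mono m →
      ∀ (u : P ⟶ R) (v : Q ⟶ S), u ≫ m = e ≫ v → ∃ l : Q ⟶ R, e ≫ l = u ∧ l ≫ m = v)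
    (f : X ⟶ Y) (g : B ⟶ Y) (h : Y ⟶ Z) (hmono : Mono h)
    (hcomm : ∃ φ' : A ⟶ Z, k ≫ φ' = f ≫ h ∧ s ≫ φ' = g ≫ h) :
    ∃ φ : A ⟶ Y, k ≫ φ = f ∧ s ≫ φ = g := by
  obtain ⟨φ', hk, hs⟩ := hcomm
  let P := pullback φ' h
  have hpm : Mono (pullback.fst φ' h) := by
    haveI := hmono
    infer_instance
  have hiso : IsIso (pullback.fst φ' h) := by
    apply hext _ hpm
    · exact ⟨pullback.lift k f hk, pullback.lift_fst _ _ _⟩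
    · exact ⟨pullback.lift s g hs, pullback.lift_fst _ _ _⟩
  have key : (inv (pullback.fst φ' h) ≫ pullback.snd φ' h) ≫ h = φ' := by
    rw [Category.assoc, ← pullback.condition, IsIso.inv_hom_id_assoc]
  refine ⟨inv (pullback.fst φ' h) ≫ pullback.snd φ' h, ?_, ?_⟩
  · rw [← cancel_mono h, Category.assoc, key, hk]
  · rw [← cancel_mono h, Category.assoc, key, hs]
end

section
/- In a normal category (pointed regular category in which every regular epimorphism is a normal epimorphism), given an extremally epic cospan (k : X → A, s : B → A) and arrows f : X → Y, g : B → Y, the arrows f and g commute relatively to (k,s) if and only if their relative commutator [f,g]_{k,s} is the zero subobject of Y. Here [f,g]_{k,s} is the image of the composite [f,g] ∘ ι, where ι : X ◇_{k,s} B → X + B is the kernel of the canonical arrow [k,s] : X + B → A, and [f,g] : X + B → Y is induced by f and g. -/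
open CategoryTheory CategoryTheory.Limits

/-! Since `(k, s)` is extremally epic, `[k, s] : X + B ⟶ A` is an extremal, hence strong, hence
normal epimorphism, so it is the cokernel of its kernel `X ◇ B ⟶ X + B`. Thus `[f, g]` factors
through `[k, s]`, which is exactly relative commutation, iff it vanishes on `X ◇ B`, iff the image
of that restriction is zero. -/

namespace CategoryTheory.Limits

variable {C : Type*} [Category C]

theorem isZero_image_iff [HasZeroMorphisms C] [HasZeroObject C] {X Y : C} (f : X ⟶ Y)
    [HasImage f] : IsZero (image f) ↔ f = 0 := by
  refine ⟨fun h => ?_, fun h => (isZero_zero C).of_iso (imageZero' h)⟩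
  rw [← image.fac f, h.eq_of_src (image.ι f) 0, comp_zero]

theorem exists_coprod_desc_comp_eq_iff [HasBinaryCoproducts C] {X B A Y : C}
    (k : X ⟶ A) (s : B ⟶ A) (f : X ⟶ Y) (g : B ⟶ Y) :
    (∃ φ : A ⟶ Y, k ≫ φ = f ∧ s ≫ φ = g) ↔ ∃ φ : A ⟶ Y, coprod.desc k s ≫ φ = coprod.desc f g :=
  exists_congr fun φ => by
    constructor
    · rintro ⟨hk, hs⟩
      ext <;> simp [hk, hs]
    · intro h
      exact ⟨by simpa only [coprod.inl_desc_assoc, coprod.inl_desc] using coprod.inl ≫= h,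
        by simpa only [coprod.inr_desc_assoc, coprod.inr_desc] using coprod.inr ≫= h⟩

theorem extremalEpi_coprod_desc [HasBinaryCoproducts C] [HasEqualizers C] {X B A : C}
    (k : X ⟶ A) (s : B ⟶ A)
    (hext : ∀ {M : C} (m : M ⟶ A), Mono m →
      (∃ k' : X ⟶ M, k' ≫ m = k) → (∃ s' : B ⟶ M, s' ≫ m = s) → IsIso m) :
    ExtremalEpi (coprod.desc k s) :=
  ExtremalEpi.mk_of_hasEqualizers _ fun _ p i fac _ =>
    hext i inferInstance ⟨coprod.inl ≫ p, by rw [Category.assoc, fac, coprod.inl_desc]⟩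
      ⟨coprod.inr ≫ p, by rw [Category.assoc, fac, coprod.inr_desc]⟩

theorem NormalEpi.exists_comp_eq_iff_kernel_ι_comp_eq_zero [HasZeroMorphisms C] {P Q W : C}
    (q : P ⟶ Q) [hq : NormalEpi q] [HasKernel q] (h : P ⟶ W) :
    (∃ φ : Q ⟶ W, q ≫ φ = h) ↔ kernel.ι q ≫ h = 0 := by
  constructor
  · rintro ⟨φ, rfl⟩
    rw [kernel.condition_assoc, zero_comp]
  · intro hh
    have hg : hq.g ≫ h = 0 := by
      rw [← kernel.lift_ι q _ hq.w, Category.assoc, hh, comp_zero]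
    exact ⟨NormalEpi.desc' q h hg, (NormalEpi.desc' q h hg).2⟩

end CategoryTheory.Limits

/-- In a normal category (pointed regular, every regular/strong epi is a normal
epi), given an extremally epic cospan `(k, s)` and arrows `f : X ⟶ Y`, `g : B ⟶ Y`, the
arrows `f` and `g` commute relatively to `(k, s)` if and only if their relative commutator
`[f,g]_{k,s}` — the image of `[f,g] ∘ ker([k,s])` — is the zero subobject of `Y`. -/
theorem relative_commute_iff_commutator_isZero {C : Type*} [Category C]
    [HasZeroMorphisms C] [HasZeroObject C] [HasFiniteLimits C] [HasKernels C]
    [HasBinaryCoproducts C] [HasImages C]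
    (hnormal : ∀ {P Q : C} (q : P ⟶ Q), StrongEpi q → Nonempty (NormalEpi q))
    {X A B Y : C} (k : X ⟶ A) (s : B ⟶ A)
    (hext : ∀ {M : C} (m : M ⟶ A), Mono m →
      (∃ k' : X ⟶ M, k' ≫ m = k) → (∃ s' : B ⟶ M, s' ≫ m = s) → IsIso m)
    (f : X ⟶ Y) (g : B ⟶ Y) :
    (∃ φ : A ⟶ Y, k ≫ φ = f ∧ s ≫ φ = g) ↔
      IsZero (image (kernel.ι (coprod.desc k s) ≫ coprod.desc f g)) := by
  have hstrong : StrongEpi (coprod.desc k s) :=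
    (extremalEpi_iff_strongEpi_of_hasPullbacks _).1 (extremalEpi_coprod_desc k s hext)
  obtain ⟨_⟩ := hnormal _ hstrong
  rw [isZero_image_iff, exists_coprod_desc_comp_eq_iff,
    NormalEpi.exists_comp_eq_iff_kernel_ι_comp_eq_zero]
end

section
/- In a regular pointed category, given an extremally epic cospan (k : X → A, s : B → A), arrows f : X → Y, g : B → Y, and a morphism h : Y → Z, the relative commutator satisfies [h ∘ f, h ∘ g]_{k,s} = h([f,g]_{k,s}), i.e. the (k,s)-commutator of h ∘ f and h ∘ g is the direct image along h of the (k,s)-commutator of f and g. -/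
open CategoryTheory CategoryTheory.Limits

lemma imageSubobject_strongEpi_comp {C : Type*} [Category C] {W V U : C}
    (e : W ⟶ V) (w : V ⟶ U) [StrongEpi e] [HasImage w] [HasImage (e ≫ w)]
    [StrongEpi (factorThruImage w)] :
    imageSubobject (e ≫ w) = imageSubobject w := by
  let F : StrongEpiMonoFactorisation (e ≫ w) :=
    { I := image w, m := image.ι w, e := e ≫ factorThruImage w
      e_strong_epi := strongEpi_comp _ _ }
  exact Subobject.mk_eq_mk_of_comm _ _
    (show image (e ≫ w) ≅ image w from IsImage.isoExt (Image.isImage (e ≫ w)) F.toMonoIsImage)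
    (IsImage.isoExt_hom_m _ _)

/-- In a regular pointed category, the relative commutator satisfies
`[h ∘ f, h ∘ g]_{k,s} = h([f,g]_{k,s})`: the `(k,s)`-commutator of `h ∘ f` and `h ∘ g`
is the direct image along `h` of the `(k,s)`-commutator of `f` and `g`. -/
theorem relative_commutator_direct_image {C : Type*} [Category C]
    [HasZeroMorphisms C] [HasZeroObject C] [HasFiniteLimits C] [HasKernels C]
    [HasBinaryCoproducts C] [HasImages C] [HasStrongEpiImages C]
    {X A B Y Z : C} (k : X ⟶ A) (s : B ⟶ A)
    (hext : ∀ {M : C} (m : M ⟶ A), Mono m →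
      (∃ k' : X ⟶ M, k' ≫ m = k) → (∃ s' : B ⟶ M, s' ≫ m = s) → IsIso m)
    (f : X ⟶ Y) (g : B ⟶ Y) (h : Y ⟶ Z) :
    imageSubobject (kernel.ι (coprod.desc k s) ≫ coprod.desc (f ≫ h) (g ≫ h)) =
      imageSubobject
        ((imageSubobject (kernel.ι (coprod.desc k s) ≫ coprod.desc f g)).arrow ≫ h) := by
  have h1 : kernel.ι (coprod.desc k s) ≫ coprod.desc (f ≫ h) (g ≫ h) =
      factorThruImageSubobject (kernel.ι (coprod.desc k s) ≫ coprod.desc f g) ≫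
        ((imageSubobject (kernel.ι (coprod.desc k s) ≫ coprod.desc f g)).arrow ≫ h) := by
    rw [← Category.assoc, imageSubobject_arrow_comp, Category.assoc, coprod.desc_comp]
  rw [h1]
  have : StrongEpi (factorThruImageSubobject (kernel.ι (coprod.desc k s) ≫ coprod.desc f g)) := by
    unfold factorThruImageSubobject
    exact strongEpi_comp _ _
  exact imageSubobject_strongEpi_comp _ _
end

section
/- In a pointed protomodular finitely complete category, if the normalisation c ∘ k of a reflexive graph (d, c : C₁ → C₀, e) is a monomorphism (k being a kernel of d), then d and c are jointly monic, i.e. the reflexive graph is a reflexive relation. -/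
/-!
A morphism into a product is zero exactly when both of its components are. So the kernel of
`⟨d, c⟩` lies in the kernel of `d`, where it is annihilated by the monomorphism `c ∘ ker d`;
hence that kernel is zero, and protomodularity makes `⟨d, c⟩` a monomorphism.
-/

open CategoryTheory CategoryTheory.Limits

namespace CategoryTheory.Limits

variable {C : Type*} [Category C] [HasZeroMorphisms C]

lemma comp_prod_lift_eq_zero_iff {W X Y Z : C} [HasBinaryProduct X Y] (h : W ⟶ Z)
    (f : Z ⟶ X) (g : Z ⟶ Y) : h ≫ prod.lift f g = 0 ↔ h ≫ f = 0 ∧ h ≫ g = 0 := by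
  constructor
  · intro hfg
    constructor
    · simpa only [Category.assoc, prod.lift_fst, zero_comp] using hfg =≫ prod.fst
    · simpa only [Category.assoc, prod.lift_snd, zero_comp] using hfg =≫ prod.snd
  · rintro ⟨hf, hg⟩
    ext <;> simp only [Category.assoc, prod.lift_fst, prod.lift_snd, hf, hg, zero_comp]

lemma eq_zero_of_comp_eq_zero_of_mono_kernel_ι_comp {X Y Z : C} {d c : X ⟶ Y} [HasKernel d]
    [Mono (kernel.ι d ≫ c)] {h : Z ⟶ X} (hd : h ≫ d = 0) (hc : h ≫ c = 0) : h = 0 := by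
  have hlift : kernel.lift d h hd = 0 := by
    rw [← cancel_mono (kernel.ι d ≫ c), kernel.lift_ι_assoc, hc, zero_comp]
  rw [← kernel.lift_ι d h hd, hlift, zero_comp]

lemma isZero_kernel_prod_lift_of_mono_kernel_ι_comp {X Y : C} (d c : X ⟶ Y) [HasKernel d]
    [HasBinaryProduct Y Y] [HasKernel (prod.lift d c)] [Mono (kernel.ι d ≫ c)] :
    IsZero (kernel (prod.lift d c)) := by
  obtain ⟨hd, hc⟩ := (comp_prod_lift_eq_zero_iff _ d c).mp (kernel.condition (prod.lift d c))
  exact IsZero.of_mono_eq_zero _ (eq_zero_of_comp_eq_zero_of_mono_kernel_ι_comp hd hc)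

end CategoryTheory.Limits

theorem reflexive_relation_of_normalisation_mono_general {C : Type*} [Category C]
    [HasZeroMorphisms C] [HasFiniteLimits C]
    (hproto : ∀ {P Q : C} (f : P ⟶ Q), IsZero (kernel f) → Mono f)
    {C₁ C₀ : C} (d c : C₁ ⟶ C₀)
    (hmono : Mono (kernel.ι d ≫ c)) :
    Mono (prod.lift d c) :=
  hproto _ (isZero_kernel_prod_lift_of_mono_kernel_ι_comp d c)

/-- In a pointed protomodular finitely complete category (protomodularity
encoded by the fact that a morphism whose kernel is zero is a monomorphism), if the
normalisation `c ∘ k` of a reflexive graph `(d, c : C₁ ⟶ C₀, e)` is a monomorphism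
(`k` being a kernel of `d`), then `d` and `c` are jointly monic, i.e. the reflexive
graph is a reflexive relation. -/
theorem reflexive_relation_of_normalisation_mono {C : Type*} [Category C]
    [HasZeroMorphisms C] [HasFiniteLimits C]
    (hproto : ∀ {P Q : C} (f : P ⟶ Q), IsZero (kernel f) → Mono f)
    {C₁ C₀ : C} (d c : C₁ ⟶ C₀) (e : C₀ ⟶ C₁)
    (hde : e ≫ d = 𝟙 C₀) (hce : e ≫ c = 𝟙 C₀)
    (hmono : Mono (kernel.ι d ≫ c)) :
    Mono (prod.lift d c) :=
  reflexive_relation_of_normalisation_mono_general hproto d c hmono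
end

section
/- In an exact Mal'tsev category, for a reflexive graph (d, c : C₁ → C₀, e), the arrow (d,c) : C₁ → C₀ × C₀ is an epimorphism if and only if the pushout π₀(C) of d and c is a zero object. Moreover, when this holds, (d,c) is a regular epimorphism. -/
/-!
Since `e` is a common section of `d` and `c`, the two coprojections of `π₀ = pushout d c`
coincide. If `(d, c)` is epi, that coprojection `i` satisfies `fst ≫ i = snd ≫ i` on `C₀ × C₀`,
and precomposing with `(𝟙, 0)` gives `i = 0`, so `π₀` is zero. Conversely, over a zero object
the pullback `C₀ ×_{π₀} C₀` is the product `C₀ × C₀`, so `(d, c)` is, up to this isomorphism,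
the comparison map, which is a regular epi in an exact Mal'tsev category.
-/

open CategoryTheory CategoryTheory.Limits

universe v u

variable {C : Type u} [Category.{v} C]

lemma pushout_inl_eq_inr_of_common_section {X Y : C} {d c : X ⟶ Y} (e : Y ⟶ X)
    (hde : e ≫ d = 𝟙 Y) (hce : e ≫ c = 𝟙 Y) [HasPushout d c] :
    pushout.inl d c = pushout.inr d c :=
  calc pushout.inl d c = e ≫ d ≫ pushout.inl d c := by rw [reassoc_of% hde]
    _ = e ≫ c ≫ pushout.inr d c := by rw [pushout.condition]
    _ = pushout.inr d c := by rw [reassoc_of% hce]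

lemma eq_zero_of_prod_fst_comp_eq_prod_snd_comp [HasZeroMorphisms C] {X Y : C}
    [HasBinaryProduct X X] {h : X ⟶ Y} (w : prod.fst ≫ h = prod.snd ≫ h) : h = 0 :=
  calc h = prod.lift (𝟙 X) (0 : X ⟶ X) ≫ prod.fst ≫ h := by
        rw [prod.lift_fst_assoc, Category.id_comp]
    _ = prod.lift (𝟙 X) (0 : X ⟶ X) ≫ prod.snd ≫ h := by rw [w]
    _ = 0 := by rw [prod.lift_snd_assoc, zero_comp]

lemma isZero_pushout_of_epi_prod_lift [HasZeroMorphisms C] {X Y : C} {d c : X ⟶ Y}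
    (e : Y ⟶ X) (hde : e ≫ d = 𝟙 Y) (hce : e ≫ c = 𝟙 Y) [HasPushout d c]
    [HasBinaryProduct Y Y] [Epi (prod.lift d c)] : IsZero (pushout d c) := by
  have hinl := pushout_inl_eq_inr_of_common_section e hde hce
  have hzero : pushout.inl d c = 0 := by
    refine eq_zero_of_prod_fst_comp_eq_prod_snd_comp ((cancel_epi (prod.lift d c)).mp ?_)
    rw [prod.lift_fst_assoc, prod.lift_snd_assoc, pushout.condition, hinl]
  rw [IsZero.iff_id_eq_zero]
  apply pushout.hom_ext <;> simp [← hinl, hzero]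

lemma IsPullback.prod_fst_snd_of_isTerminal {X Y Z : C} [HasBinaryProduct X Y]
    (hZ : IsTerminal Z) (f : X ⟶ Z) (g : Y ⟶ Z) : IsPullback prod.fst prod.snd f g := by
  obtain rfl : f = hZ.from X := hZ.hom_ext _ _
  obtain rfl : g = hZ.from Y := hZ.hom_ext _ _
  exact IsPullback.of_is_product (limit.isLimit _) hZ

noncomputable def regularEpiProdLiftOfIsTerminal {W X Y Z : C} {f : X ⟶ Z} {g : Y ⟶ Z}
    [HasPullback f g] [HasBinaryProduct X Y] (hZ : IsTerminal Z) {a : W ⟶ X} {b : W ⟶ Y}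
    (w : a ≫ f = b ≫ g) (h : RegularEpi (pullback.lift a b w)) :
    RegularEpi (prod.lift a b) :=
  let hP := IsPullback.prod_fst_snd_of_isTerminal hZ f g
  h.ofArrowIso <| Arrow.isoMk (Iso.refl W) hP.isoPullback.symm <| by
    apply prod.hom_ext <;> simp [prod.lift_fst, prod.lift_snd, pullback.lift_fst, pullback.lift_snd]

theorem epi_iff_pushout_isZero_general {C : Type*} [Category C]
    [HasZeroMorphisms C] [HasFiniteLimits C]
    {C₁ C₀ : C} (d c : C₁ ⟶ C₀) (e : C₀ ⟶ C₁)
    (hde : e ≫ d = 𝟙 C₀) (hce : e ≫ c = 𝟙 C₀)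
    [HasPushout d c]
    (hmaltsev : Nonempty (RegularEpi
      (pullback.lift d c pushout.condition :
        C₁ ⟶ pullback (pushout.inl d c) (pushout.inr d c)))) :
    (Epi (prod.lift d c) ↔ IsZero (pushout d c)) ∧
    (Epi (prod.lift d c) → Nonempty (RegularEpi (prod.lift d c))) := by
  obtain ⟨hcomparison⟩ := hmaltsev
  have regularEpi_of_isZero (hz : IsZero (pushout d c)) :
      Nonempty (RegularEpi (prod.lift d c)) :=
    ⟨regularEpiProdLiftOfIsTerminal hz.isTerminal pushout.condition hcomparison⟩
  refine ⟨⟨fun _ ↦ isZero_pushout_of_epi_prod_lift e hde hce, fun hz ↦ ?_⟩, fun _ ↦ ?_⟩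
  · exact (regularEpi_of_isZero hz).some.epi
  · exact regularEpi_of_isZero (isZero_pushout_of_epi_prod_lift e hde hce)

/-- In an exact Mal'tsev category (pointed, finitely complete; exactness and
the Mal'tsev property are encoded via the CKP property that the comparison morphism from
`C₁` to the pullback of the pushout of the split epimorphisms `d` and `c` is a regular
epimorphism), for a reflexive graph `(d, c : C₁ ⟶ C₀, e)`, the arrow
`(d,c) : C₁ ⟶ C₀ × C₀` is an epimorphism if and only if the pushout `π₀(C)` of `d` and
`c` is a zero object; moreover, when this holds, `(d,c)` is a regular epimorphism. -/
theorem epi_iff_pushout_isZero {C : Type*} [Category C]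
    [HasZeroMorphisms C] [HasZeroObject C] [HasFiniteLimits C]
    {C₁ C₀ : C} (d c : C₁ ⟶ C₀) (e : C₀ ⟶ C₁)
    (hde : e ≫ d = 𝟙 C₀) (hce : e ≫ c = 𝟙 C₀)
    [HasPushout d c]
    (hmaltsev : Nonempty (RegularEpi
      (pullback.lift d c pushout.condition :
        C₁ ⟶ pullback (pushout.inl d c) (pushout.inr d c)))) :
    (Epi (prod.lift d c) ↔ IsZero (pushout d c)) ∧
    (Epi (prod.lift d c) → Nonempty (RegularEpi (prod.lift d c))) :=
  epi_iff_pushout_isZero_general d c e hde hce hmaltsev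
end

section
/- In the category of groups, given a group homomorphism ∂ : X → B and an action ξ of B on X (by automorphisms), the pair (∂, ξ) with conjugation compatibility ∂(b·x) = b ∂(x) b⁻¹ for all b ∈ B, x ∈ X (the precrossed module condition) and the Peiffer identity (∂x)·y = x y x⁻¹ for all x, y ∈ X is equivalent to the associated reflexive graph (X ⋊_ξ B, B, d, c, e), where d(x,b) = b, c(x,b) = ∂(x)b, e(b) = (1,b), carrying a groupoid (multiplicative) structure with multiplication m((x,b),(y,c)) = (xy, c) whenever d(x,b) = c(y,c). -/
/-- In the category of groups, for `δ : X →* B` and an action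
`ξ : B →* MulAut X`, the crossed module axioms (equivariance `δ(b·x) = b δ(x) b⁻¹`
and the Peiffer identity `(δx)·y = x y x⁻¹`) hold if and only if the associated
reflexive graph `(X ⋊_ξ B, B, d, c, e)` — with `d(x,b) = b`, `c(x,b) = δ(x)b`,
`e(b) = (1,b)` — carries a groupoid (multiplicative) structure with multiplication
`m((x,b),(y,c)) = (xy, c)` whenever `d(x,b) = c(y,c)`: that is, `c` is a homomorphism,
`m` is a homomorphism on the pullback, and the unit laws hold. -/
theorem crossed_module_iff_multiplicative {X B : Type*} [Group X] [Group B]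
    (δ : X →* B) (ξ : B →* MulAut X) :
    ((∀ b x, δ (ξ b x) = b * δ x * b⁻¹) ∧ (∀ x y, ξ (δ x) y = x * y * x⁻¹)) ↔
    (let d : X ⋊[ξ] B → B := fun p => p.right
     let cm : X ⋊[ξ] B → B := fun p => δ p.left * p.right
     let em : B → X ⋊[ξ] B := fun b => ⟨1, b⟩
     let m : X ⋊[ξ] B → X ⋊[ξ] B → X ⋊[ξ] B := fun p q => ⟨p.left * q.left, q.right⟩
     (∀ p q : X ⋊[ξ] B, cm (p * q) = cm p * cm q) ∧
     (∀ p q p' q' : X ⋊[ξ] B, d p = cm q → d p' = cm q' →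
        m (p * p') (q * q') = m p q * m p' q') ∧
     (∀ p : X ⋊[ξ] B, m p (em (d p)) = p) ∧
     (∀ q : X ⋊[ξ] B, m (em (cm q)) q = q)) := by
  constructor
  · rintro ⟨heq, hpf⟩
    refine ⟨?_, ?_, ?_, ?_⟩
    · intro p q
      simp only [SemidirectProduct.mul_left, SemidirectProduct.mul_right, map_mul, heq]
      group
    · rintro ⟨x, b⟩ ⟨y, c⟩ ⟨x', b'⟩ ⟨y', c'⟩ h h'
      simp only at h h'
      ext
      · simp only [SemidirectProduct.mul_left, SemidirectProduct.mul_right, h, map_mul, MulAut.mul_apply, hpf]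
        group
      · simp [SemidirectProduct.mul_right]
    · intro p; ext <;> simp
    · intro q; ext <;> simp
  · rintro ⟨hc, hm, -, -⟩
    constructor
    · intro b x
      have := hc ⟨1, b⟩ ⟨x, 1⟩
      simp only [SemidirectProduct.mul_left, SemidirectProduct.mul_right, map_one,
        one_mul, mul_one] at this
      rw [← this]; group
    · intro y x
      have := hm ⟨1, δ y⟩ ⟨y, 1⟩ ⟨x, 1⟩ ⟨1, 1⟩ (by simp) (by simp)
      have h2 := congrArg SemidirectProduct.left this
      simp only [SemidirectProduct.mul_left, SemidirectProduct.mul_right, map_one,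
        one_mul, mul_one, MulAut.one_apply] at h2
      rw [← h2]; group
end
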